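/- Let N be a natural number, m ∈ ℝᴺ, K a symmetric N×N real matrix, β a real number, and τ > 0. Let (ψⁿ)_{n≥0} and (pⁿ)_{n≥0} be sequences in ℝᴺ such that for every n ≥ 0, writing ψ̄ⁿ = (ψⁿ + ψⁿ⁺¹)/2 and p̄ⁿ = (pⁿ + pⁿ⁺¹)/2, the scheme with α = 0 holds componentwise: mᵢ (1 − 2β p̄ⁿᵢ)(pᵢⁿ⁺¹ − pᵢⁿ)/τ + (Kψ̄ⁿ)ᵢ = 0 and (1 − 2β p̄ⁿᵢ)(ψᵢⁿ⁺¹ − ψᵢⁿ)/τ = (1 − 2β p̄ⁿᵢ) p̄ⁿᵢ − (β/6)(pᵢⁿ⁺¹ − pᵢⁿ)² for all i. Then the discrete energy E_h(ψ,p) = ½ ψᵀKψ + Σᵢ mᵢ (½ − (2β/3) pᵢ) pᵢ² is conserved exactly: E_h(ψⁿ, pⁿ) = E_h(ψ⁰, p⁰) for all n ≥ 0. -/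

import Mathlib

/-!
The scheme is a discrete gradient method. For symmetric `K` the increment of the quadratic
form is `(ψⁿ⁺¹ − ψⁿ) ⬝ K ψ̄ⁿ`, and for the cubic potential `g(x) = (½ − (2β/3)x)x²` one has
exactly `g(y) − g(x) = (y − x)((1 − 2β x̄) x̄ − (β/6)(y − x)²)` with `x̄ = (x + y)/2`, the
right-hand side of the second equation. Multiplying the first equation by `ψᵢⁿ⁺¹ − ψᵢⁿ` and
using the second one, the two increments cancel componentwise.
-/

open Matrix

/-- The discrete (mass-lumped) energy `E_h(ψ,p) = ½ψᵀKψ + Σᵢ mᵢ(½ − (2β/3)pᵢ)pᵢ²`. -/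
noncomputable def Eh {N : ℕ} (m : Fin N → ℝ) (K : Matrix (Fin N) (Fin N) ℝ) (β : ℝ)
    (ψ p : Fin N → ℝ) : ℝ :=
  (1 / 2) * (ψ ⬝ᵥ K.mulVec ψ) + ∑ i, m i * ((1 / 2 - (2 * β / 3) * p i) * (p i) ^ 2)

theorem Matrix.IsSymm.sub_dotProduct_mulVec_midpoint {ι R : Type*} [Fintype ι] [Field R]
    {K : Matrix ι ι R} (hK : K.IsSymm) (a b : ι → R) :
    (b - a) ⬝ᵥ K *ᵥ (fun j => (a j + b j) / 2) = (b ⬝ᵥ K *ᵥ b - a ⬝ᵥ K *ᵥ a) / 2 := by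
  have hba : b ⬝ᵥ K *ᵥ a = a ⬝ᵥ K *ᵥ b := by
    rw [dotProduct_mulVec, ← mulVec_transpose, hK, dotProduct_comm]
  have hmid : (fun j => (a j + b j) / 2) = (2⁻¹ : R) • (a + b) := by
    funext j
    simp only [Pi.smul_apply, Pi.add_apply, smul_eq_mul]
    ring
  rw [hmid, mulVec_smul, mulVec_add, dotProduct_smul, sub_dotProduct, dotProduct_add,
    dotProduct_add, smul_eq_mul, hba]
  ring

theorem cubic_potential_sub (β x y : ℝ) :
    (1 / 2 - (2 * β / 3) * y) * y ^ 2 - (1 / 2 - (2 * β / 3) * x) * x ^ 2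
      = (y - x) * ((1 - 2 * β * ((x + y) / 2)) * ((x + y) / 2) - (β / 6) * (y - x) ^ 2) := by
  ring

theorem Eh_eq_of_scheme_step {N : ℕ} {m : Fin N → ℝ} {K : Matrix (Fin N) (Fin N) ℝ}
    (hK : K.IsSymm) {β τ : ℝ} {a b x y : Fin N → ℝ}
    (h1 : ∀ i, m i * (1 - 2 * β * ((x i + y i) / 2)) * (y i - x i) / τ
        + (K *ᵥ fun j => (a j + b j) / 2) i = 0)
    (h2 : ∀ i, (1 - 2 * β * ((x i + y i) / 2)) * (b i - a i) / τ
        = (1 - 2 * β * ((x i + y i) / 2)) * ((x i + y i) / 2) - (β / 6) * (y i - x i) ^ 2) :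
    Eh m K β b y = Eh m K β a x := by
  have hcomponent : ∀ i, (b i - a i) * (K *ᵥ fun j => (a j + b j) / 2) i
      = m i * ((1 / 2 - (2 * β / 3) * x i) * x i ^ 2)
        - m i * ((1 / 2 - (2 * β / 3) * y i) * y i ^ 2) := by
    intro i
    linear_combination (b i - a i) * h1 i - m i * (y i - x i) * h2 i
      - m i * cubic_potential_sub β (x i) (y i)
  have hpotential : (b - a) ⬝ᵥ K *ᵥ (fun j => (a j + b j) / 2)
      = ∑ i, m i * ((1 / 2 - (2 * β / 3) * x i) * x i ^ 2)
        - ∑ i, m i * ((1 / 2 - (2 * β / 3) * y i) * y i ^ 2) := by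
    simp only [dotProduct, Pi.sub_apply, hcomponent, Finset.sum_sub_distrib]
  have hquadratic := hK.sub_dotProduct_mulVec_midpoint a b
  unfold Eh
  linarith

theorem one_step_scheme_energy_conservation_general (N : ℕ) (m : Fin N → ℝ)
    (K : Matrix (Fin N) (Fin N) ℝ) (hK : K.IsSymm) (β τ : ℝ)
    (ψ p : ℕ → Fin N → ℝ)
    (h1 : ∀ n : ℕ, ∀ i,
      m i * (1 - 2 * β * ((p n i + p (n + 1) i) / 2)) * (p (n + 1) i - p n i) / τ
        + (K.mulVec (fun j => (ψ n j + ψ (n + 1) j) / 2)) i = 0)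
    (h2 : ∀ n : ℕ, ∀ i,
      (1 - 2 * β * ((p n i + p (n + 1) i) / 2)) * (ψ (n + 1) i - ψ n i) / τ
        = (1 - 2 * β * ((p n i + p (n + 1) i) / 2)) * ((p n i + p (n + 1) i) / 2)
          - (β / 6) * (p (n + 1) i - p n i) ^ 2) :
    ∀ n : ℕ, Eh m K β (ψ n) (p n) = Eh m K β (ψ 0) (p 0) := by
  intro n
  induction n with
  | zero => rfl
  | succ n ih => rw [← ih]; exact Eh_eq_of_scheme_step hK (h1 n) (h2 n)

/-- Exact energy conservation of the nondissipative (`α = 0`) one-step mass-lumped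
structure-preserving scheme for the Westervelt equation: the discrete energy is
constant along the whole discrete trajectory. -/
theorem one_step_scheme_energy_conservation (N : ℕ) (m : Fin N → ℝ)
    (K : Matrix (Fin N) (Fin N) ℝ) (hK : K.IsSymm) (β τ : ℝ) (hτ : 0 < τ)
    (ψ p : ℕ → Fin N → ℝ)
    (h1 : ∀ n : ℕ, ∀ i,
      m i * (1 - 2 * β * ((p n i + p (n + 1) i) / 2)) * (p (n + 1) i - p n i) / τ
        + (K.mulVec (fun j => (ψ n j + ψ (n + 1) j) / 2)) i = 0)
    (h2 : ∀ n : ℕ, ∀ i,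
      (1 - 2 * β * ((p n i + p (n + 1) i) / 2)) * (ψ (n + 1) i - ψ n i) / τ
        = (1 - 2 * β * ((p n i + p (n + 1) i) / 2)) * ((p n i + p (n + 1) i) / 2)
          - (β / 6) * (p (n + 1) i - p n i) ^ 2) :
    ∀ n : ℕ, Eh m K β (ψ n) (p n) = Eh m K β (ψ 0) (p 0) :=
  one_step_scheme_energy_conservation_general N m K hK β τ ψ p h1 h2
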